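/- Let n be a positive integer and let A be an automorphism of ℤ^n such that the endomorphism A − id (given by v ↦ A(v) − v) is injective. Form the semidirect product G = ℤ^n ⋊_A ℤ, in which the generator of the ℤ factor acts on ℤ^n by A. Then every group homomorphism from G to ℤ vanishes on the ℤ^n factor, and the group of all group homomorphisms G → ℤ is infinite cyclic, generated by the projection (v, m) ↦ m. In particular Hom(G, ℤ) ≅ ℤ. -/
import Mathlib


namespace Stmt12

/-- The action of the generator of `ℤ` on `ℤⁿ` through an automorphism `A` of `ℤⁿ`. -/
def act (n : ℕ) (A : (Fin n → ℤ) ≃+ (Fin n → ℤ)) :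
    Multiplicative ℤ →* MulAut (Multiplicative (Fin n → ℤ)) :=
  zpowersHom (MulAut (Multiplicative (Fin n → ℤ))) (AddEquiv.toMultiplicative A)

/-- The semidirect product `G = ℤⁿ ⋊_A ℤ`, where the generator of the `ℤ` factor acts on
`ℤⁿ` by `A`. -/
abbrev G (n : ℕ) (A : (Fin n → ℤ) ≃+ (Fin n → ℤ)) : Type :=
  Multiplicative (Fin n → ℤ) ⋊[act n A] Multiplicative ℤ

/-- Evaluation at a point, as a monoid hom on the group of homs into a commutative group. -/
def evalAt {H : Type*} [Group H] (g : H) :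
    (H →* Multiplicative ℤ) →* Multiplicative ℤ where
  toFun f := f g
  map_one' := rfl
  map_mul' _ _ := rfl

theorem zpow_apply' {H : Type*} [Group H] (f : H →* Multiplicative ℤ) (k : ℤ) (g : H) :
    (f ^ k) g = f g ^ k :=
  map_zpow (evalAt g) f k

theorem part1 (n : ℕ) (A : (Fin n → ℤ) ≃+ (Fin n → ℤ))
    (hA : Function.Injective (A.toAddMonoidHom - AddMonoidHom.id (Fin n → ℤ)))
    (f : G n A →* Multiplicative ℤ) (v : Multiplicative (Fin n → ℤ)) :
    f (SemidirectProduct.inl v) = 1 := by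
  set B : (Fin n → ℤ) →+ (Fin n → ℤ) := A.toAddMonoidHom - AddMonoidHom.id (Fin n → ℤ) with hB
  -- conjugation invariance
  have key : ∀ w : Fin n → ℤ, f (SemidirectProduct.inl (Multiplicative.ofAdd (A w)))
      = f (SemidirectProduct.inl (Multiplicative.ofAdd w)) := by
    intro w
    have h1 : (act n A) (Multiplicative.ofAdd (1 : ℤ)) (Multiplicative.ofAdd w)
        = Multiplicative.ofAdd (A w) := by
      simp [act, zpowersHom_apply]
    have := SemidirectProduct.inl_aut (φ := act n A) (Multiplicative.ofAdd (1 : ℤ))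
      (Multiplicative.ofAdd w)
    rw [h1] at this
    rw [this, map_mul, map_mul, map_inv, mul_right_comm]
    simp
  have keyB : ∀ w : Fin n → ℤ, f (SemidirectProduct.inl (Multiplicative.ofAdd (B w))) = 1 := by
    intro w
    have : Multiplicative.ofAdd (B w) =
        Multiplicative.ofAdd (A w) * (Multiplicative.ofAdd w)⁻¹ := by
      simp [hB, sub_eq_add_neg, ofAdd_add]
    rw [this, map_mul, map_mul, key, map_inv, map_inv, mul_inv_cancel]
  -- determinant argument
  obtain ⟨d, hd, hdw⟩ : ∃ d : ℤ, d ≠ 0 ∧ ∀ v : Fin n → ℤ, ∃ w, B w = d • v := by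
    set M : Matrix (Fin n) (Fin n) ℤ := LinearMap.toMatrix' B.toIntLinearMap with hM
    have hmv : ∀ v, M.mulVec v = B v := by
      intro v
      have : Matrix.toLin' M v = B.toIntLinearMap v := by rw [hM, Matrix.toLin'_toMatrix']
      simpa [Matrix.toLin'_apply] using this
    have hdet : M.det ≠ 0 := by
      intro h
      obtain ⟨v, hv, hv0⟩ := Matrix.exists_mulVec_eq_zero_iff.2 h
      exact hv (hA (by simpa [hmv v] using hv0.trans (map_zero B).symm))
    refine ⟨M.det, hdet, fun v => ⟨Matrix.cramer M v, ?_⟩⟩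
    rw [← hmv, Matrix.mulVec_cramer]
  obtain ⟨w, hw⟩ := hdw (Multiplicative.toAdd v)
  have h2 : f (SemidirectProduct.inl v) ^ d = 1 := by
    have : Multiplicative.ofAdd (d • Multiplicative.toAdd v) = v ^ d := by
      apply Multiplicative.toAdd.injective
      rw [toAdd_ofAdd, toAdd_zpow]
    rw [← map_zpow, ← map_zpow, ← this, ← hw, keyB]
  have := congrArg Multiplicative.toAdd h2
  simp only [toAdd_zpow, toAdd_one, smul_eq_mul] at this
  have : Multiplicative.toAdd (f (SemidirectProduct.inl v)) = 0 := by
    rcases mul_eq_zero.1 this with h | h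
    · exact absurd h hd
    · exact h
  exact Multiplicative.toAdd.injective (by simpa using this)

/-- Let `n ≥ 1` and let `A` be an automorphism of `ℤⁿ` such that
`A − id : v ↦ A v − v` is injective; form the semidirect product `G = ℤⁿ ⋊_A ℤ`. Then every
homomorphism `G → ℤ` vanishes on the `ℤⁿ` factor, and the group of homomorphisms `G → ℤ` is
infinite cyclic, generated by the projection `(v, m) ↦ m`; in particular `Hom(G, ℤ) ≅ ℤ`. -/
theorem stmt12 (n : ℕ) (hn : 0 < n) (A : (Fin n → ℤ) ≃+ (Fin n → ℤ))
    (hA : Function.Injective (A.toAddMonoidHom - AddMonoidHom.id (Fin n → ℤ))) :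
    (∀ (f : G n A →* Multiplicative ℤ) (v : Multiplicative (Fin n → ℤ)),
        f (SemidirectProduct.inl v) = 1) ∧
    Subgroup.zpowers (SemidirectProduct.rightHom : G n A →* Multiplicative ℤ) = ⊤ ∧
    ¬ IsOfFinOrder (SemidirectProduct.rightHom : G n A →* Multiplicative ℤ) ∧
    Nonempty ((G n A →* Multiplicative ℤ) ≃* Multiplicative ℤ) := by
  have p1 := part1 n A hA
  -- every f equals rightHom ^ k
  have decomp : ∀ (f : G n A →* Multiplicative ℤ),
      f = (SemidirectProduct.rightHom : G n A →* Multiplicative ℤ) ^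
        (Multiplicative.toAdd (f (SemidirectProduct.inr (Multiplicative.ofAdd (1 : ℤ))))) := by
    intro f
    set k := Multiplicative.toAdd (f (SemidirectProduct.inr (Multiplicative.ofAdd (1 : ℤ))))
    ext g
    have hg : g = SemidirectProduct.inl g.left * SemidirectProduct.inr g.right :=
      (SemidirectProduct.inl_left_mul_inr_right g).symm
    rw [hg, map_mul, p1 f, one_mul]
    have hr : g.right = (Multiplicative.ofAdd (1 : ℤ)) ^ (Multiplicative.toAdd g.right) := by
      simp [← ofAdd_zsmul]
    rw [zpow_apply', map_mul, SemidirectProduct.rightHom_inl, one_mul,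
      SemidirectProduct.rightHom_inr]
    conv_lhs => rw [hr]
    rw [map_zpow, map_zpow]
    apply Multiplicative.toAdd.injective
    simp only [toAdd_zpow, smul_eq_mul]
    rw [mul_comm]
  refine ⟨p1, ?_, ?_, ?_⟩
  · rw [Subgroup.eq_top_iff']
    intro f
    exact ⟨_, (decomp f).symm⟩
  · intro hfin
    obtain ⟨m, hm, hpow⟩ := isOfFinOrder_iff_pow_eq_one.1 hfin
    have := congrArg (fun φ : G n A →* Multiplicative ℤ =>
      φ (SemidirectProduct.inr (Multiplicative.ofAdd (1 : ℤ)))) hpow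
    simp only [MonoidHom.pow_apply, SemidirectProduct.rightHom_inr, MonoidHom.one_apply] at this
    have : (m : ℤ) * 1 = 0 := by
      simpa [← ofAdd_nsmul] using congrArg Multiplicative.toAdd this
    omega
  · refine ⟨MulEquiv.ofBijective
      ({ toFun := fun f => f (SemidirectProduct.inr (Multiplicative.ofAdd (1 : ℤ))),
         map_one' := rfl, map_mul' := fun f g => rfl } :
        (G n A →* Multiplicative ℤ) →* Multiplicative ℤ) ⟨?_, ?_⟩⟩
    · intro f g hfg
      simp only [MonoidHom.coe_mk, OneHom.coe_mk] at hfg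
      rw [decomp f, decomp g, hfg]
    · intro z
      refine ⟨(SemidirectProduct.rightHom : G n A →* Multiplicative ℤ) ^ (Multiplicative.toAdd z), ?_⟩
      show (SemidirectProduct.rightHom ^ Multiplicative.toAdd z) (SemidirectProduct.inr _) = z
      rw [zpow_apply', SemidirectProduct.rightHom_inr]
      apply Multiplicative.toAdd.injective
      simp

end Stmt12
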